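/- Let f be a radial locally integrable function on ℝⁿ \ {0}, f(x) = f₀(|x|), with ∫_{|x|>1} |f(x)| |x|^{k-n} dx < ∞, and let 1 ≤ k ≤ n−1. Then for almost every k-plane τ at distance r from the origin, (Rf)(τ) = π^{k/2} (I^{k/2}_{-,2} f₀)(r), i.e. the k-plane transform of a radial function equals π^{k/2} times the Erdélyi–Kober integral of order k/2 of its radial profile. -/

import Mathlib

/-!
Since `eₙ₋₁` is orthogonal to the image of `embK`, the point `r eₙ₋₁ + v` of the plane has norm
`√(r² + |v|²)`, so the integrand is a radial function on `ℝᵏ`. Polar coordinates in `ℝᵏ` turn the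
integral into `(2 π^{k/2} / Γ(k/2)) ∫₀^∞ y^{k-1} f₀(√(r² + y²)) dy`, and the substitution
`s = √(r² + y²)` turns this into the Erdélyi–Kober integral.
-/

open MeasureTheory Real Set

/-- Right-sided modified Erdélyi–Kober fractional integral of order `α`. -/
noncomputable def EKminus (α : ℝ) (g : ℝ → ℝ) (t : ℝ) : ℝ :=
  2 * (Real.Gamma α)⁻¹ * ∫ s in Ioi t, g s * s * (s ^ 2 - t ^ 2) ^ (α - 1)

/-- Embedding of `ℝᵏ` into `ℝⁿ` via the first `k` coordinates. -/
noncomputable def embK (k n : ℕ) (v : EuclideanSpace ℝ (Fin k)) :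
    EuclideanSpace ℝ (Fin n) :=
  WithLp.toLp 2 (fun i : Fin n => if h : (i : ℕ) < k then v ⟨i, h⟩ else 0)

open Module

lemma embK_apply_of_le {k n : ℕ} {i : Fin n} (hi : k ≤ i) (v : EuclideanSpace ℝ (Fin k)) :
    embK k n v i = 0 := by
  simp [embK, hi.not_gt]

lemma norm_embK {k n : ℕ} (hkn : k ≤ n) (v : EuclideanSpace ℝ (Fin k)) :
    ‖embK k n v‖ = ‖v‖ := by
  obtain ⟨m, rfl⟩ := Nat.exists_eq_add_of_le hkn
  simp [EuclideanSpace.norm_eq, Fin.sum_univ_add, embK]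

lemma norm_smul_single_add_embK {k n : ℕ} {i : Fin n} (hi : k ≤ i) (r : ℝ)
    (v : EuclideanSpace ℝ (Fin k)) :
    ‖r • EuclideanSpace.single i (1 : ℝ) + embK k n v‖ = √(r ^ 2 + ‖v‖ ^ 2) := by
  have horth : inner ℝ (r • EuclideanSpace.single i (1 : ℝ)) (embK k n v) = 0 := by
    rw [real_inner_smul_left, EuclideanSpace.inner_single_left, embK_apply_of_le hi, mul_zero,
      mul_zero]
  rw [norm_add_eq_sqrt_iff_real_inner_eq_zero.2 horth, norm_smul, PiLp.norm_single, norm_one,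
    mul_one, norm_embK (hi.trans i.isLt.le), ← sq, ← sq, norm_eq_abs, sq_abs]

lemma integral_fun_norm_eq_mul_integral_Ioi {E : Type*} [NormedAddCommGroup E]
    [InnerProductSpace ℝ E] [FiniteDimensional ℝ E] [MeasurableSpace E] [BorelSpace E]
    [Nontrivial E] (g : ℝ → ℝ) :
    ∫ x : E, g ‖x‖ = 2 * π ^ ((finrank ℝ E : ℝ) / 2) / Gamma ((finrank ℝ E : ℝ) / 2) *
      ∫ y in Ioi 0, y ^ (finrank ℝ E - 1) * g y := by
  have hd : 0 < (finrank ℝ E : ℝ) := Nat.cast_pos.2 finrank_pos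
  have hsqrt : √π ^ finrank ℝ E = π ^ ((finrank ℝ E : ℝ) / 2) := by
    rw [sqrt_eq_rpow, ← rpow_natCast, ← rpow_mul pi_pos.le]
    ring_nf
  rw [integral_fun_norm_addHaar, measureReal_def, InnerProductSpace.volume_ball,
    ENNReal.toReal_mul, ENNReal.toReal_pow, ENNReal.toReal_ofReal zero_le_one,
    ENNReal.toReal_ofReal (by positivity), one_pow, one_mul, hsqrt,
    Gamma_add_one (by positivity), nsmul_eq_mul]
  simp only [smul_eq_mul]
  field_simp

lemma image_sqrt_sq_add_sq_Ioi {r : ℝ} (hr : 0 ≤ r) :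
    (fun y ↦ √(r ^ 2 + y ^ 2)) '' Ioi 0 = Ioi r := by
  ext s
  refine ⟨?_, fun (hs : r < s) ↦ ⟨√(s ^ 2 - r ^ 2), sqrt_pos.2 (by nlinarith), ?_⟩⟩
  · rintro ⟨y, hy : 0 < y, rfl⟩
    exact lt_sqrt_of_sq_lt (by nlinarith)
  · dsimp only
    rw [sq_sqrt (by nlinarith), add_sub_cancel, sqrt_sq (hr.trans hs.le)]

lemma mul_rpow_sq_half_sub_one {y : ℝ} (hy : 0 < y) {k : ℕ} (hk : 1 ≤ k) :
    y * (y ^ 2) ^ ((k : ℝ) / 2 - 1) = y ^ (k - 1) := by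
  rw [← rpow_natCast_mul hy.le, ← rpow_natCast, Nat.cast_sub hk, Nat.cast_one,
    show (k : ℝ) - 1 = 1 + (2 : ℕ) * ((k : ℝ) / 2 - 1) by push_cast; ring, rpow_add hy, rpow_one]

lemma integral_Ioi_pow_mul_comp_sqrt_sq_add {k : ℕ} (hk : 1 ≤ k) {r : ℝ} (hr : 0 ≤ r)
    (g : ℝ → ℝ) :
    ∫ y in Ioi 0, y ^ (k - 1) * g √(r ^ 2 + y ^ 2)
      = ∫ s in Ioi r, g s * s * (s ^ 2 - r ^ 2) ^ ((k : ℝ) / 2 - 1) := by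
  have hderiv : ∀ y ∈ Ioi (0 : ℝ), HasDerivWithinAt (fun y ↦ √(r ^ 2 + y ^ 2))
      (y / √(r ^ 2 + y ^ 2)) (Ioi 0) y := by
    intro y (hy : 0 < y)
    refine (((hasDerivAt_pow 2 y).const_add (r ^ 2)).sqrt (by positivity)).hasDerivWithinAt
      |>.congr_deriv ?_
    field_simp
    norm_num
  have hmono : StrictMonoOn (fun y ↦ √(r ^ 2 + y ^ 2)) (Ioi 0) := fun a (ha : 0 < a) b _ hab ↦
    sqrt_lt_sqrt (by positivity) (by nlinarith)
  rw [← image_sqrt_sq_add_sq_Ioi hr,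
    integral_image_eq_integral_abs_deriv_smul measurableSet_Ioi hderiv hmono.injOn]
  refine setIntegral_congr_fun measurableSet_Ioi fun y (hy : 0 < y) ↦ ?_
  have hs : 0 < √(r ^ 2 + y ^ 2) := sqrt_pos.2 (by positivity)
  rw [abs_of_pos (div_pos hy hs), smul_eq_mul, sq_sqrt (by positivity), add_sub_cancel_left,
    ← mul_rpow_sq_half_sub_one hy hk]
  field_simp

/-- For a radial locally integrable function `f(x) = f₀(|x|)` on `ℝⁿ \ {0}` with
`∫_{|x|>1} |f| |x|^{k-n} < ∞`, the `k`-plane transform over (almost every) `k`-plane at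
distance `r` from the origin — realized as the plane `r eₙ + span(e₁,…,e_k)` — equals
`π^{k/2} (I^{k/2}_{-,2} f₀)(r)`. -/
theorem kplane_transform_radial (n k : ℕ) (hk1 : 1 ≤ k) (hkn : k ≤ n - 1)
    (f : EuclideanSpace ℝ (Fin n) → ℝ) (f₀ : ℝ → ℝ)
    (hrad : ∀ x, f x = f₀ ‖x‖) :
    ∀ᵐ r ∂(volume.restrict (Ioi (0 : ℝ))),
      (∫ v : EuclideanSpace ℝ (Fin k),
          f (r • EuclideanSpace.single (⟨n - 1, by omega⟩ : Fin n) (1 : ℝ) + embK k n v))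
        = π ^ ((k : ℝ) / 2) * EKminus ((k : ℝ) / 2) f₀ r := by
  have : Nonempty (Fin k) := ⟨⟨0, hk1⟩⟩
  have hi : k ≤ ((⟨n - 1, by omega⟩ : Fin n) : ℕ) := hkn
  filter_upwards [ae_restrict_mem measurableSet_Ioi] with r (hr : 0 < r)
  simp_rw [hrad, norm_smul_single_add_embK hi]
  rw [integral_fun_norm_eq_mul_integral_Ioi (fun y ↦ f₀ √(r ^ 2 + y ^ 2)),
    finrank_euclideanSpace_fin, integral_Ioi_pow_mul_comp_sqrt_sq_add hk1 hr.le, EKminus]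
  ring
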